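/- If V is an infinite-dimensional ℚ-vector space, then the cardinality of the dual space V* equals 2^(dim V), which is strictly greater than the cardinality of V. -/
import Mathlib

/-- If `V` is an infinite-dimensional `ℚ`-vector space, then the cardinality of the dual space
`V*` equals `2 ^ (dim V)`, which is strictly greater than the cardinality of `V`. -/
theorem stmt_1 (V : Type*) [AddCommGroup V] [Module ℚ V]
    (h : Cardinal.aleph0 ≤ Module.rank ℚ V) :
    Cardinal.mk (Module.Dual ℚ V) = 2 ^ Module.rank ℚ V ∧
    Cardinal.mk V < Cardinal.mk (Module.Dual ℚ V) := by
  obtain ⟨⟨ι, b⟩⟩ := Module.Free.exists_basis (R := ℚ) (M := V)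
  have hι : Cardinal.mk ι = Module.rank ℚ V := b.mk_eq_rank''
  have hinf : Infinite ι := by
    rw [← Cardinal.aleph0_le_mk_iff, hι]; exact h
  have hdual : Cardinal.mk (Module.Dual ℚ V) = 2 ^ Module.rank ℚ V := by
    have e : (ι → ℚ) ≃ Module.Dual ℚ V := (b.constr ℚ (M' := ℚ)).toEquiv
    rw [← e.cardinal_eq, Cardinal.mk_arrow, Cardinal.mk_eq_aleph0 ℚ, Cardinal.lift_aleph0, hι,
      Cardinal.lift_id']
    exact Cardinal.power_eq_two_power h ((Cardinal.nat_lt_aleph0 2).le) h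
  refine ⟨hdual, ?_⟩
  have hV : Cardinal.mk V = Module.rank ℚ V := by
    rw [b.repr.toEquiv.cardinal_eq, Cardinal.mk_finsupp_lift_of_infinite, Cardinal.mk_eq_aleph0 ℚ,
      Cardinal.lift_aleph0, hι, Cardinal.lift_id', max_eq_left h]
  rw [hV, hdual]
  exact Cardinal.cantor' _ Cardinal.one_lt_two |>.trans_le (le_of_eq rfl)
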